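/- arXiv:1905.12121 — 3 statements merged into one kernel-verified Lean document; each statement's English description precedes it below -/
import Mathlib

section
/- Let d ∈ ℕ, let θ₀, θ* ∈ ℝ^d, set λ = ‖θ*‖, and let η > 0, γ > 0 satisfy ηγ ≤ 1. Define the sequence θ_{t+1} = θ_t + η·γ·(θ* − θ_t)/(1 + exp(γ·⟨θ_t, θ* − θ_t⟩)) and set ρ = 1 − ηγ/(1 + exp(λ²γ)). Then for every K ∈ ℕ, ‖θ_K − θ*‖ ≤ ρ^K·‖θ₀ − θ*‖. -/
/-!
Each step moves `θ_t` towards `θ*` by the factor `c_t = ηγ / (1 + exp (γ ⟪θ_t, θ* - θ_t⟫))`, so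
`θ_{t+1} - θ* = (1 - c_t) (θ_t - θ*)`. Since `⟪θ, θ* - θ⟫ ≤ ‖θ*‖² / 4 ≤ λ²`, the factor satisfies
`ηγ / (1 + exp (λ² γ)) ≤ c_t ≤ ηγ ≤ 1`, i.e. `0 ≤ 1 - c_t ≤ ρ`, and the error contracts geometrically.
-/

open Real

open scoped RealInnerProductSpace

lemma real_inner_sub_self_le_norm_sq_div_four {E : Type*} [NormedAddCommGroup E]
    [InnerProductSpace ℝ E] (x y : E) : ⟪x, y - x⟫ ≤ ‖y‖ ^ 2 / 4 := by
  have hxy : ⟪x, y⟫ ≤ ‖x‖ * ‖y‖ := real_inner_le_norm x y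
  rw [inner_sub_right, real_inner_self_eq_norm_sq]
  nlinarith [sq_nonneg (‖x‖ - ‖y‖ / 2)]

lemma norm_add_smul_sub_sub {E : Type*} [SeminormedAddCommGroup E] [NormedSpace ℝ E]
    (x y : E) (c : ℝ) : ‖x + c • (y - x) - y‖ = |1 - c| * ‖x - y‖ := by
  rw [← Real.norm_eq_abs, ← norm_smul]
  congr 1
  module

lemma one_sub_div_one_add_exp_bounds {a s b : ℝ} (ha₀ : 0 ≤ a) (ha₁ : a ≤ 1) (hsb : s ≤ b) :
    0 ≤ 1 - a / (1 + exp s) ∧ 1 - a / (1 + exp s) ≤ 1 - a / (1 + exp b) := by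
  have hs : 0 < 1 + exp s := by positivity
  constructor
  · have : a / (1 + exp s) ≤ 1 := by
      rw [div_le_one hs]
      linarith [exp_pos s]
    linarith
  · have : a / (1 + exp b) ≤ a / (1 + exp s) :=
      div_le_div_of_nonneg_left ha₀ hs (by linarith [exp_le_exp.2 hsb])
    linarith

theorem stmt_2 (d : ℕ) (θ₀ θs : EuclideanSpace ℝ (Fin d))
    (lam : ℝ) (hlam : lam = ‖θs‖)
    (η γ : ℝ) (hη : 0 < η) (hγ : 0 < γ) (hηγ : η * γ ≤ 1)
    (θ : ℕ → EuclideanSpace ℝ (Fin d)) (hθ0 : θ 0 = θ₀)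
    (hθ : ∀ t, θ (t + 1) = θ t + ((η * γ) /
      (1 + Real.exp (γ * (inner ℝ (θ t) (θs - θ t) : ℝ)))) • (θs - θ t))
    (ρ : ℝ) (hρ : ρ = 1 - η * γ / (1 + Real.exp (lam ^ 2 * γ))) :
    ∀ K : ℕ, ‖θ K - θs‖ ≤ ρ ^ K * ‖θ₀ - θs‖ := by
  have hfactor : ∀ t, 0 ≤ 1 - η * γ / (1 + exp (γ * ⟪θ t, θs - θ t⟫)) ∧
      1 - η * γ / (1 + exp (γ * ⟪θ t, θs - θ t⟫)) ≤ ρ := fun t => by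
    have hinner : ⟪θ t, θs - θ t⟫ ≤ lam ^ 2 := by
      have := real_inner_sub_self_le_norm_sq_div_four (θ t) θs
      rw [hlam]
      nlinarith [sq_nonneg ‖θs‖]
    rw [hρ, mul_comm (lam ^ 2)]
    exact one_sub_div_one_add_exp_bounds (by positivity) hηγ
      (mul_le_mul_of_nonneg_left hinner hγ.le)
  have hρ₀ : 0 ≤ ρ := (hfactor 0).1.trans (hfactor 0).2
  intro K
  rw [← hθ0]
  refine le_geom (u := fun t => ‖θ t - θs‖) hρ₀ K fun t _ => ?_
  obtain ⟨hpos, hle⟩ := hfactor t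
  rw [hθ t, norm_add_smul_sub_sub, abs_of_nonneg hpos]
  exact mul_le_mul_of_nonneg_right hle (norm_nonneg _)
end

section
/- Let d ∈ ℕ, let F ⊆ ℝ^d, let θ₀, θ* ∈ ℝ^d with θ₀ ≠ θ*, set u = θ* − θ₀, and suppose there is r > 0 such that the line segment {c·u/‖u‖ : 0 < c ≤ r} is contained in F. Let η > 0. Then there exists a constant C > 0 such that for every ε with 0 < ε < ‖θ₀ − θ*‖ and every natural number K with K ≥ C·log(‖θ₀ − θ*‖/ε), there exist x_0, …, x_{K−1} ∈ F such that the OGD iterates θ_{t+1} = θ_t + η·x_t/(1 + exp(⟨θ_t, x_t⟩)) started from θ₀ satisfy ‖θ_K − θ*‖ ≤ ε. (This is part 1 of Theorem 2: if the one-sided feasible set contains a line segment from the origin in the direction θ* − θ₀, the attack is rapid.) -/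
/-!
With input `x = (c / ‖u‖) • u`, `0 < c ≤ r`, an OGD step from a point `θ` of the segment
`[θ₀, θ*]` moves `θ` towards `θ*` by the distance `η c / (1 + exp (c a))`, where
`a = ⟪θ, u⟫ / ‖u‖ ≤ ⟪θ₀, u⟫ / ‖u‖ + ‖u‖ =: A`. By the intermediate value theorem in `c`, every
advance up to `δ = η r / (1 + exp (r A))` is realised exactly. Hence with `ρ = ‖u‖ / (‖u‖ + δ)`
the iterates can be steered to `θ₀ + (1 - ρ ^ t) • u`, at distance `ρ ^ t ‖u‖` from `θ*`, which
is at most `ε` once `t ≥ log (‖u‖ / ε) / log (1 + δ / ‖u‖)`.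
-/

open Real RealInnerProductSpace Set

variable {E : Type*} [NormedAddCommGroup E] [InnerProductSpace ℝ E]

noncomputable def ogdStep (η : ℝ) (θ x : E) : E := θ + (η / (1 + exp ⟪θ, x⟫)) • x

lemma exists_mem_Ioc_mul_div_one_add_exp_eq {η a r y : ℝ} (hr : 0 ≤ r) (hy : 0 < y)
    (hyr : y ≤ η * r / (1 + exp (r * a))) :
    ∃ c ∈ Ioc 0 r, η * c / (1 + exp (c * a)) = y := by
  have hcont : ContinuousOn (fun c => η * c / (1 + exp (c * a))) (Icc 0 r) :=
    (Continuous.div (by fun_prop) (by fun_prop) fun c => by positivity).continuousOn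
  exact intermediate_value_Ioc hr hcont ⟨by simpa using hy, hyr⟩

lemma inner_add_smul_div_norm_smul (θ₀ u : E) (s c : ℝ) :
    ⟪θ₀ + s • u, (c / ‖u‖) • u⟫ = c * (⟪θ₀, u⟫ / ‖u‖ + s * ‖u‖) := by
  rw [real_inner_smul_right, inner_add_left, real_inner_smul_left, real_inner_self_eq_norm_sq]
  rcases eq_or_ne ‖u‖ 0 with hu | hu
  · simp [hu]
  · field_simp

lemma exists_ogdStep_eq_add_smul {η r s t : ℝ} {θ₀ u : E} (hu : u ≠ 0) (hη : 0 ≤ η)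
    (hr : 0 ≤ r) (hs : s ≤ 1) (ht : 0 < t)
    (htr : t * ‖u‖ ≤ η * r / (1 + exp (r * (⟪θ₀, u⟫ / ‖u‖ + ‖u‖)))) :
    ∃ c ∈ Ioc 0 r, ogdStep η (θ₀ + s • u) ((c / ‖u‖) • u) = θ₀ + (s + t) • u := by
  have hn : 0 < ‖u‖ := norm_pos_iff.mpr hu
  have ha : ⟪θ₀, u⟫ / ‖u‖ + s * ‖u‖ ≤ ⟪θ₀, u⟫ / ‖u‖ + ‖u‖ := by
    gcongr; exact mul_le_of_le_one_left hn.le hs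
  obtain ⟨c, hc, hfc⟩ := exists_mem_Ioc_mul_div_one_add_exp_eq
    (a := ⟪θ₀, u⟫ / ‖u‖ + s * ‖u‖) hr (mul_pos ht hn)
    (htr.trans (by gcongr))
  refine ⟨c, hc, ?_⟩
  have hcoef : η / (1 + exp (c * (⟪θ₀, u⟫ / ‖u‖ + s * ‖u‖))) * (c / ‖u‖) = t := by
    rw [(eq_div_iff hn.ne').mpr hfc.symm]
    ring
  rw [ogdStep, inner_add_smul_div_norm_smul, smul_smul, hcoef, add_smul, add_assoc]

lemma pow_mul_le_of_log_div_le {ρ n ε : ℝ} {K : ℕ} (hρ0 : 0 < ρ) (hρ1 : ρ < 1) (hn : 0 < n)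
    (hε : 0 < ε) (hK : (-log ρ)⁻¹ * log (n / ε) ≤ K) : ρ ^ K * n ≤ ε := by
  have hlog : 0 < -log ρ := neg_pos.mpr (log_neg hρ0 hρ1)
  have hK' : log (n / ε) ≤ K * -log ρ := by rwa [inv_mul_le_iff₀ hlog, mul_comm] at hK
  rw [← le_div_iff₀ hn, ← log_le_log_iff (by positivity) (by positivity), log_pow,
    log_div hε.ne' hn.ne']
  rw [log_div hn.ne' hε.ne'] at hK'
  linarith

theorem stmt_4 (d : ℕ) (F : Set (EuclideanSpace ℝ (Fin d)))
    (θ₀ θs : EuclideanSpace ℝ (Fin d)) (hne : θ₀ ≠ θs)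
    (u : EuclideanSpace ℝ (Fin d)) (hu : u = θs - θ₀)
    (r : ℝ) (hr : 0 < r)
    (hseg : ∀ c : ℝ, 0 < c → c ≤ r → (c / ‖u‖) • u ∈ F)
    (η : ℝ) (hη : 0 < η) :
    ∃ C : ℝ, 0 < C ∧
      ∀ ε : ℝ, 0 < ε → ε < ‖θ₀ - θs‖ →
        ∀ K : ℕ, C * Real.log (‖θ₀ - θs‖ / ε) ≤ K →
          ∃ x θ : ℕ → EuclideanSpace ℝ (Fin d),
            (∀ t < K, x t ∈ F) ∧
            θ 0 = θ₀ ∧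
            (∀ t, θ (t + 1)
              = θ t + (η / (1 + Real.exp ((inner ℝ (θ t) (x t) : ℝ)))) • x t) ∧
            ‖θ K - θs‖ ≤ ε := by
  have hu0 : u ≠ 0 := by rw [hu, sub_ne_zero]; exact hne.symm
  have hn : 0 < ‖u‖ := norm_pos_iff.mpr hu0
  set δ := η * r / (1 + exp (r * (⟪θ₀, u⟫ / ‖u‖ + ‖u‖)))
  have hδ : 0 < δ := by positivity
  set ρ := ‖u‖ / (‖u‖ + δ)
  have hρ0 : 0 < ρ := by positivity
  have hρ1 : ρ < 1 := (div_lt_one (by positivity)).mpr (by linarith)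
  have hstep (t : ℕ) :
      ∃ c ∈ Ioc 0 r, ogdStep η (θ₀ + (1 - ρ ^ t) • u) ((c / ‖u‖) • u)
        = θ₀ + (1 - ρ ^ (t + 1)) • u := by
    have hadv : (1 - ρ) * ρ ^ t * ‖u‖ ≤ δ :=
      calc (1 - ρ) * ρ ^ t * ‖u‖ ≤ (1 - ρ) * ‖u‖ := by
            gcongr
            exact mul_le_of_le_one_right (sub_nonneg.mpr hρ1.le) (pow_le_one₀ hρ0.le hρ1.le)
        _ = δ * ρ := by simp only [ρ]; field_simp; ring
        _ ≤ δ := mul_le_of_le_one_right hδ.le hρ1.le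
    have := exists_ogdStep_eq_add_smul (s := 1 - ρ ^ t) hu0 hη.le hr.le
      (sub_le_self _ (by positivity)) (mul_pos (sub_pos.mpr hρ1) (pow_pos hρ0 t)) hadv
    rwa [show 1 - ρ ^ t + (1 - ρ) * ρ ^ t = 1 - ρ ^ (t + 1) by ring] at this
  choose c hc hstep using hstep
  refine ⟨(-log ρ)⁻¹, inv_pos.mpr (neg_pos.mpr (log_neg hρ0 hρ1)), fun ε hε _ K hK => ?_⟩
  refine ⟨fun t => (c t / ‖u‖) • u, fun t => θ₀ + (1 - ρ ^ t) • u,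
    fun t _ => hseg _ (hc t).1 (hc t).2, by simp, fun t => (hstep t).symm, ?_⟩
  have hdist : θ₀ + (1 - ρ ^ K) • u - θs = -(ρ ^ K • u) := by
    rw [hu, sub_smul, one_smul]; abel
  rw [norm_sub_rev, ← hu] at hK
  rw [hdist, norm_neg, norm_smul, norm_of_nonneg (by positivity)]
  exact pow_mul_le_of_log_div_le hρ0 hρ1 hn hε hK
end

section
/- Let d ∈ ℕ, let θ₀, θ* ∈ ℝ^d, let η > 0, and let (γ_t)_{t ∈ ℕ} be positive reals with η·γ_t ≤ 1 for every t. Define the sequence θ_{t+1} = θ_t + η·γ_t·(θ* − θ_t)/(1 + exp(γ_t·⟨θ_t, θ* − θ_t⟩)). Then for every t ∈ ℕ there exists a scalar c_t ∈ [0, 1] such that θ_t − θ* = c_t·(θ₀ − θ*); that is, all iterates remain on the segment between θ₀ and θ*. -/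
open Set

theorem mem_segment_iff_sub_eq_smul {𝕜 E : Type*} [Ring 𝕜] [PartialOrder 𝕜] [IsOrderedRing 𝕜]
    [AddCommGroup E] [Module 𝕜 E] {x y z : E} :
    x ∈ segment 𝕜 y z ↔ ∃ c ∈ Icc (0 : 𝕜) 1, x - y = c • (z - y) := by
  rw [segment_eq_image']
  simp only [mem_image, sub_eq_iff_eq_add', eq_comm]

theorem div_one_add_exp_mem_Icc {a : ℝ} (ha₀ : 0 ≤ a) (ha₁ : a ≤ 1) (z : ℝ) :
    a / (1 + Real.exp z) ∈ Icc (0 : ℝ) 1 := by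
  have h_one_le : 1 ≤ 1 + Real.exp z := le_add_of_nonneg_right (Real.exp_pos z).le
  exact ⟨by positivity, (div_le_one (by linarith)).2 (ha₁.trans h_one_le)⟩

theorem stmt_7 (d : ℕ) (θ₀ θs : EuclideanSpace ℝ (Fin d))
    (η : ℝ) (hη : 0 < η) (γ : ℕ → ℝ) (hγ : ∀ t, 0 < γ t)
    (hηγ : ∀ t, η * γ t ≤ 1)
    (θ : ℕ → EuclideanSpace ℝ (Fin d)) (hθ0 : θ 0 = θ₀)
    (hθ : ∀ t, θ (t + 1) = θ t + ((η * γ t) /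
      (1 + Real.exp (γ t * (inner ℝ (θ t) (θs - θ t) : ℝ)))) • (θs - θ t)) :
    ∀ t : ℕ, ∃ c : ℝ, c ∈ Set.Icc (0 : ℝ) 1 ∧ θ t - θs = c • (θ₀ - θs) := by
  -- Each step moves `θ t` towards `θs` by a fraction in `[0, 1]`, so it stays in the convex segment.
  have h_mem : ∀ t, θ t ∈ segment ℝ θs θ₀ := by
    intro t
    induction t with
    | zero => exact hθ0 ▸ right_mem_segment ℝ θs θ₀
    | succ t ih =>
      have h_step := div_one_add_exp_mem_Icc (mul_pos hη (hγ t)).le (hηγ t)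
        (γ t * inner ℝ (θ t) (θs - θ t))
      refine (convex_segment θs θ₀).segment_subset ih (left_mem_segment ℝ θs θ₀) ?_
      rw [hθ t]
      exact mem_segment_iff_sub_eq_smul.2 ⟨_, h_step, add_sub_cancel_left _ _⟩
  exact fun t => mem_segment_iff_sub_eq_smul.1 (h_mem t)
end
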